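/- arXiv:1803.05614 — 2 statements merged into one kernel-verified Lean document; each statement's English description precedes it below -/
import Mathlib

section
/- Let Ω₀ = {P₁,P₂,P₃,P₄} as in the Demyanov–Ryabova counterexample. For any g = (g_x,g_y) with g_x = 0 and g_y < 0, the polytope P_{Ω₀}(g) equals the segment conv{(-2,0),(2,0)}. -/
open Set

noncomputable section

/-- Standard inner product on ℝ². -/
def dot2 (v g : ℝ × ℝ) : ℝ := v.1 * g.1 + v.2 * g.2

/-- Argmax of the linear functional ⟨·,g⟩ over P. -/
def argmax2 (P : Set (ℝ × ℝ)) (g : ℝ × ℝ) : Set (ℝ × ℝ) :=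
  {v ∈ P | ∀ u ∈ P, dot2 u g ≤ dot2 v g}

/-- P_Ω(g) = conv ⋃_{P∈Ω} Argmax_{v∈P}⟨v,g⟩. -/
def polyConv (Ω : Set (Set (ℝ × ℝ))) (g : ℝ × ℝ) : Set (ℝ × ℝ) :=
  convexHull ℝ (⋃ P ∈ Ω, argmax2 P g)

def P1 : Set (ℝ × ℝ) := convexHull ℝ {(1, 0), (1, 1), (-1, 0)}
def P2 : Set (ℝ × ℝ) := convexHull ℝ {(-1, 0), (-1, 1), (1, 0)}
def P3 : Set (ℝ × ℝ) := convexHull ℝ {(1, 2), (-1, 2), (0, 0)}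
def P4 : Set (ℝ × ℝ) := convexHull ℝ {(2, 0), (-2, 0)}

def Ω0 : Set (Set (ℝ × ℝ)) := {P1, P2, P3, P4}

/-- Reflection through the y-axis. -/
def σ2 : ℝ × ℝ → ℝ × ℝ := fun p => (-p.1, p.2)

/-!
For `g = (0, g₂)` with `g₂ < 0`, maximising `⟨v, g⟩` over a polytope means minimising the
height `v.2`. All four polytopes lie in the wedge `0 ≤ y, |x| ≤ y + 2` and touch the x-axis,
so each argmax is the polytope's trace on the x-axis. These traces all lie in the segment
`P₄ = [-2, 2] × {0}`, which is its own argmax, so the convex hull of their union is `P₄`.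
-/

lemma polyConv_eq_argmax2_of_subset {Ω : Set (Set (ℝ × ℝ))} {Q : Set (ℝ × ℝ)} {g : ℝ × ℝ}
    (hQ : Q ∈ Ω) (hconv : Convex ℝ (argmax2 Q g)) (hsub : ∀ P ∈ Ω, argmax2 P g ⊆ argmax2 Q g) :
    polyConv Ω g = argmax2 Q g := by
  have hunion : (⋃ P ∈ Ω, argmax2 P g) = argmax2 Q g :=
    (iUnion₂_subset hsub).antisymm (subset_biUnion_of_mem (u := fun P => argmax2 P g) hQ)
  rw [polyConv, hunion, hconv.convexHull_eq]

lemma argmax2_eq_of_nonneg_snd {P : Set (ℝ × ℝ)} {g : ℝ × ℝ} (hx : g.1 = 0) (hy : g.2 < 0)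
    (hP : ∀ v ∈ P, 0 ≤ v.2) (htouch : ∃ p ∈ P, p.2 = 0) :
    argmax2 P g = {v ∈ P | v.2 = 0} := by
  obtain ⟨p, hp, hp0⟩ := htouch
  ext v
  simp only [argmax2, dot2, hx, mul_zero, zero_add, mem_ofPred_eq]
  refine and_congr_right fun hv => ⟨fun hmax => ?_, fun hv0 u hu => ?_⟩
  · have := hmax p hp
    nlinarith [hP v hv]
  · nlinarith [hP u hu]

lemma mem_P4 {v : ℝ × ℝ} : v ∈ P4 ↔ v.2 = 0 ∧ |v.1| ≤ 2 := by
  rw [P4, convexHull_pair]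
  constructor
  · rintro ⟨a, b, ha, hb, hab, rfl⟩
    simp only [Prod.smul_mk, Prod.mk_add_mk, smul_eq_mul, mul_zero, add_zero, true_and]
    rw [abs_le]
    constructor <;> linarith
  · rintro ⟨hv2, hv1⟩
    rw [abs_le] at hv1
    refine ⟨(2 + v.1) / 4, (2 - v.1) / 4, by linarith, by linarith, by ring, ?_⟩
    ext
    · simp only [Prod.smul_mk, Prod.mk_add_mk, smul_eq_mul]
      ring
    · simp [hv2]

def upperWedge : Set (ℝ × ℝ) := {v | 0 ≤ v.2 ∧ |v.1| ≤ v.2 + 2}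

lemma convex_upperWedge : Convex ℝ upperWedge := by
  intro v ⟨hv2, hv1⟩ w ⟨hw2, hw1⟩ a b ha hb hab
  simp only [upperWedge, mem_ofPred_eq, Prod.fst_add, Prod.snd_add, Prod.smul_fst, Prod.smul_snd,
    smul_eq_mul]
  refine ⟨by positivity, ?_⟩
  calc |a * v.1 + b * w.1| ≤ a * |v.1| + b * |w.1| := by
        simpa [abs_mul, abs_of_nonneg ha, abs_of_nonneg hb] using abs_add_le (a * v.1) (b * w.1)
    _ ≤ a * (v.2 + 2) + b * (w.2 + 2) := by gcongr
    _ = a * v.2 + b * w.2 + 2 := by linear_combination 2 * hab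

lemma subset_upperWedge_of_mem_Ω0 {P : Set (ℝ × ℝ)} (hP : P ∈ Ω0) : P ⊆ upperWedge := by
  rcases hP with rfl | rfl | rfl | rfl <;>
  · refine convexHull_min ?_ convex_upperWedge
    simp only [insert_subset_iff, singleton_subset_iff, upperWedge, mem_ofPred_eq]
    norm_num

lemma exists_snd_eq_zero_of_mem_Ω0 {P : Set (ℝ × ℝ)} (hP : P ∈ Ω0) : ∃ p ∈ P, p.2 = 0 := by
  rcases hP with rfl | rfl | rfl | rfl
  · exact ⟨(1, 0), subset_convexHull ℝ _ (by simp), rfl⟩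
  · exact ⟨(1, 0), subset_convexHull ℝ _ (by simp), rfl⟩
  · exact ⟨(0, 0), subset_convexHull ℝ _ (by simp), rfl⟩
  · exact ⟨(2, 0), subset_convexHull ℝ _ (by simp), rfl⟩

lemma argmax2_subset_P4_of_mem_Ω0 {P : Set (ℝ × ℝ)} (hP : P ∈ Ω0) {g : ℝ × ℝ} (hx : g.1 = 0)
    (hy : g.2 < 0) : argmax2 P g ⊆ P4 := by
  rw [argmax2_eq_of_nonneg_snd hx hy (fun v hv => (subset_upperWedge_of_mem_Ω0 hP hv).1)
    (exists_snd_eq_zero_of_mem_Ω0 hP)]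
  rintro v ⟨hv, hv0⟩
  have hv1 := (subset_upperWedge_of_mem_Ω0 hP hv).2
  rw [hv0, zero_add] at hv1
  exact mem_P4.mpr ⟨hv0, hv1⟩

lemma argmax2_P4 {g : ℝ × ℝ} (hx : g.1 = 0) (hy : g.2 < 0) : argmax2 P4 g = P4 := by
  rw [argmax2_eq_of_nonneg_snd hx hy (fun u hu => (mem_P4.mp hu).1.ge)
    (exists_snd_eq_zero_of_mem_Ω0 (by simp [Ω0]))]
  exact sep_eq_self_iff_mem_true.mpr fun v hv => (mem_P4.mp hv).1

theorem stmt7 (g : ℝ × ℝ) (hx : g.1 = 0) (hy : g.2 < 0) :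
    polyConv Ω0 g = convexHull ℝ {(-2, 0), (2, 0)} := by
  have hargmax := argmax2_P4 hx hy
  calc polyConv Ω0 g = argmax2 P4 g :=
        polyConv_eq_argmax2_of_subset (by simp [Ω0]) (by rw [hargmax]; exact convex_convexHull ℝ _)
          fun P hP => hargmax.symm ▸ argmax2_subset_P4_of_mem_Ω0 hP hx hy
    _ = P4 := hargmax
    _ = convexHull ℝ {(-2, 0), (2, 0)} := by rw [P4, pair_comm]
end
end

section
/- Let Ω₀ = {P₁,P₂,P₃,P₄} as in the Demyanov–Ryabova counterexample. For any g = (g_x,g_y) with g_x > 0 and g_y = -g_x/2, the polytope P_{Ω₀}(g) equals conv{(0,0),(1,2),(2,0)}. -/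
open Set

noncomputable section

/-!
A linear functional attains its maximum over the convex hull of a set exactly on the convex hull
of the points of the set where it is maximal. For `g` a positive multiple of `(2, -1)`, evaluating
at the vertices gives the maximizers `(1, 0)` on `P₁` and `P₂`, the edge `[(0, 0), (1, 2)]` on
`P₃`, and `(2, 0)` on `P₄`. Since `(1, 0)` is the midpoint of `(0, 0)` and `(2, 0)`, these pieces
span the triangle `conv {(0, 0), (1, 2), (2, 0)}`.
-/

theorem sep_insert_eq_ite {α : Type*} (a : α) (s : Set α) (p : α → Prop) [Decidable (p a)] :
    {x ∈ insert a s | p x} = if p a then insert a {x ∈ s | p x} else {x ∈ s | p x} := by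
  ext x; split_ifs <;> simp only [mem_sep_iff, mem_insert_iff] <;> grind

theorem sep_singleton_eq_ite {α : Type*} (a : α) (p : α → Prop) [Decidable (p a)] :
    {x ∈ ({a} : Set α) | p x} = if p a then {a} else ∅ := by
  ext x; split_ifs <;> simp only [mem_singleton_iff] <;> grind

section Argmax

variable {E : Type*} [AddCommGroup E] [Module ℝ E]

theorem mem_convexHull_sep_of_map_eq {l : E →ₗ[ℝ] ℝ} {s : Set E} {c : ℝ}
    (hle : ∀ x ∈ s, l x ≤ c) {v : E} (hv : v ∈ convexHull ℝ s) (hlv : l v = c) :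
    v ∈ convexHull ℝ {x ∈ s | l x = c} := by
  classical
  obtain ⟨ι, t, w, z, hw₀, hw₁, hz, rfl⟩ := (convexHull_eq s).subset hv
  -- The defects `c - l (z i)` are nonnegative with weighted sum `0`,
  -- so every point of positive weight lies on the level set.
  have hsum : ∑ i ∈ t, w i * (c - l (z i)) = 0 := by
    simp only [mul_sub, Finset.sum_sub_distrib, ← Finset.sum_mul, hw₁, one_mul, ← hlv,
      Finset.centerMass_eq_of_sum_1 _ _ hw₁, map_sum, map_smul, smul_eq_mul]
    ring
  have hterm := (Finset.sum_eq_zero_iff_of_nonneg fun i hi =>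
    mul_nonneg (hw₀ i hi) (sub_nonneg.2 (hle _ (hz i hi)))).1 hsum
  rw [← Finset.centerMass_filter_ne_zero]
  refine Finset.centerMass_mem_convexHull _ (fun i hi => hw₀ i (Finset.filter_subset _ _ hi))
    (by rw [Finset.sum_filter_ne_zero, hw₁]; exact one_pos) fun i hi => ?_
  obtain ⟨hi, hwi⟩ := Finset.mem_filter.1 hi
  exact ⟨hz i hi, by linarith [(mul_eq_zero.1 (hterm i hi)).resolve_left hwi]⟩

theorem argmax_convexHull_eq {l : E →ₗ[ℝ] ℝ} {s : Set E} {x₀ : E} (hx₀ : x₀ ∈ s)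
    (hle : ∀ x ∈ s, l x ≤ l x₀) :
    {v ∈ convexHull ℝ s | ∀ u ∈ convexHull ℝ s, l u ≤ l v}
      = convexHull ℝ {x ∈ s | l x = l x₀} := by
  have hhull : ∀ u ∈ convexHull ℝ s, l u ≤ l x₀ :=
    convexHull_min hle (convex_halfSpace_le l.isLinear _)
  apply Subset.antisymm
  · rintro v ⟨hv, hmax⟩
    exact mem_convexHull_sep_of_map_eq hle hv
      (le_antisymm (hhull v hv) (hmax x₀ (subset_convexHull ℝ s hx₀)))
  · have hlevel : convexHull ℝ {x ∈ s | l x = l x₀} ⊆ {v | l v = l x₀} :=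
      convexHull_min (fun x hx => hx.2) (convex_hyperplane l.isLinear _)
    intro v hv
    refine ⟨convexHull_mono (sep_subset _ _) hv, fun u hu => ?_⟩
    rw [hlevel hv]
    exact hhull u hu

end Argmax

def dot2Linear (g : ℝ × ℝ) : ℝ × ℝ →ₗ[ℝ] ℝ :=
  g.1 • LinearMap.fst ℝ ℝ ℝ + g.2 • LinearMap.snd ℝ ℝ ℝ

theorem dot2Linear_apply (g v : ℝ × ℝ) : dot2Linear g v = dot2 v g := by
  simp only [dot2Linear, dot2, LinearMap.add_apply, LinearMap.smul_apply, LinearMap.fst_apply,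
    LinearMap.snd_apply, smul_eq_mul]
  ring

theorem argmax2_convexHull_eq {s : Set (ℝ × ℝ)} {g x₀ : ℝ × ℝ} (hx₀ : x₀ ∈ s)
    (hle : ∀ x ∈ s, dot2 x g ≤ dot2 x₀ g) :
    argmax2 (convexHull ℝ s) g = convexHull ℝ {x ∈ s | dot2 x g = dot2 x₀ g} := by
  simpa only [argmax2, dot2Linear_apply] using
    argmax_convexHull_eq (l := dot2Linear g) hx₀ (by simpa only [dot2Linear_apply])

theorem dot2_neg_half (a : ℝ) (v : ℝ × ℝ) : dot2 v (a, -a / 2) = a * (v.1 - v.2 / 2) := by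
  simp only [dot2]; ring

section NegHalf

variable {a : ℝ}

theorem argmax2_P1_neg_half (ha : 0 < a) : argmax2 P1 (a, -a / 2) = {(1, 0)} := by
  classical
  rw [P1, argmax2_convexHull_eq (x₀ := (1, 0)) (by simp)
    (by simp [dot2_neg_half]; constructor <;> linarith)]
  simp only [sep_insert_eq_ite, sep_singleton_eq_ite, dot2_neg_half, mul_right_inj' ha.ne']
  norm_num

theorem argmax2_P2_neg_half (ha : 0 < a) : argmax2 P2 (a, -a / 2) = {(1, 0)} := by
  classical
  rw [P2, argmax2_convexHull_eq (x₀ := (1, 0)) (by simp)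
    (by simp [dot2_neg_half]; constructor <;> linarith)]
  simp only [sep_insert_eq_ite, sep_singleton_eq_ite, dot2_neg_half, mul_right_inj' ha.ne']
  norm_num

theorem argmax2_P3_neg_half (ha : 0 < a) :
    argmax2 P3 (a, -a / 2) = convexHull ℝ {(1, 2), (0, 0)} := by
  classical
  rw [P3, argmax2_convexHull_eq (x₀ := (0, 0)) (by simp) (by simp [dot2_neg_half]; linarith)]
  simp only [sep_insert_eq_ite, sep_singleton_eq_ite, dot2_neg_half, mul_right_inj' ha.ne']
  norm_num

theorem argmax2_P4_neg_half (ha : 0 < a) : argmax2 P4 (a, -a / 2) = {(2, 0)} := by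
  classical
  rw [P4, argmax2_convexHull_eq (x₀ := (2, 0)) (by simp) (by simp [dot2_neg_half]; linarith)]
  simp only [sep_insert_eq_ite, sep_singleton_eq_ite, dot2_neg_half, mul_right_inj' ha.ne']
  norm_num

end NegHalf

theorem stmt9 (g : ℝ × ℝ) (hx : 0 < g.1) (hy : g.2 = -g.1 / 2) :
    polyConv Ω0 g = convexHull ℝ {(0, 0), (1, 2), (2, 0)} := by
  obtain ⟨a, b⟩ := g
  obtain rfl : b = -a / 2 := hy
  have hmid : ((1 : ℝ), (0 : ℝ)) ∈ convexHull ℝ {(0, 0), (1, 2), (2, 0)} :=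
    segment_subset_convexHull (x := (0, 0)) (y := (2, 0)) (by simp) (by simp)
      ⟨1 / 2, 1 / 2, by norm_num, by norm_num, by norm_num, by norm_num⟩
  simp only [polyConv, Ω0, biUnion_insert, biUnion_singleton, argmax2_P1_neg_half hx,
    argmax2_P2_neg_half hx, argmax2_P3_neg_half hx, argmax2_P4_neg_half hx]
  apply Subset.antisymm
  · refine convexHull_min ?_ (convex_convexHull ℝ _)
    simp only [union_subset_iff, singleton_subset_iff]
    refine ⟨hmid, hmid, convexHull_mono ?_, subset_convexHull ℝ _ (by simp)⟩
    simp only [insert_subset_iff, singleton_subset_iff, mem_insert_iff, mem_singleton_iff]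
    norm_num
  · refine convexHull_mono ?_
    simp only [insert_subset_iff, singleton_subset_iff, mem_union, mem_singleton_iff]
    norm_num [left_mem_segment, right_mem_segment]
end
end
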